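/- Let H be an infinite-dimensional complex Hilbert space, n ≥ 2 an integer, and φ : P_n(H) → P_n(H) a map such that for every pair U, V ∈ P_n(H): U ⊥ V if and only if φ(U) ⊥ φ(V), and U ∩ V = {0} if and only if φ(U) ∩ φ(V) = {0}. Then for all U, V, W ∈ P_n(H) satisfying U # V, U # W, V # W and U ∩ V = U ∩ W = V ∩ W, one has φ(U) # φ(V), φ(U) # φ(W), φ(V) # φ(W), and φ(U) ∩ φ(V) = φ(U) ∩ φ(W) = φ(V) ∩ φ(W). -/

import Mathlib

/-- Two subspaces are orthogonal if every vector of one is orthogonal to every vector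
of the other. -/
def SubPerp {H : Type*} [NormedAddCommGroup H] [InnerProductSpace ℂ H]
    (U V : Submodule ℂ H) : Prop :=
  ∀ x ∈ U, ∀ y ∈ V, (inner ℂ x y : ℂ) = 0

/-- `U # V` (`U` and `V` are 1-orthogonal): `dim (U ∩ V) = 1` and the orthogonal
complement of `U ∩ V` within `U` is orthogonal to the orthogonal complement of `U ∩ V`
within `V`. -/
def OneOrth {H : Type*} [NormedAddCommGroup H] [InnerProductSpace ℂ H]
    (U V : Submodule ℂ H) : Prop :=
  Module.finrank ℂ (U ⊓ V : Submodule ℂ H) = 1 ∧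
  ∀ x ∈ U, ∀ y ∈ V,
    (∀ z ∈ U ⊓ V, (inner ℂ x z : ℂ) = 0) → (∀ z ∈ U ⊓ V, (inner ℂ y z : ℂ) = 0) →
    (inner ℂ x y : ℂ) = 0

/-!
Let `L = U ⊓ V` be the common line; `A = Lᗮ ⊓ U` has dimension `n - 1` and is orthogonal to
`V` and `W`. Since `H` is infinite-dimensional, the vectors of an orthonormal basis `aᵢ` of `A`
can be completed by fresh orthonormal vectors to pairwise orthogonal `n`-spaces `Xᵢ ∋ aᵢ`
orthogonal to `V` and `W`. The images `φ Xᵢ` are then pairwise orthogonal, orthogonal to `φ V`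
and `φ W`, and meet `φ U`; one nonzero vector from each `φ Xᵢ ⊓ φ U` spans an
`(n - 1)`-dimensional `T ≤ φ U` orthogonal to `φ V` and `φ W`. As `φ U ⊓ φ V ≠ 0`, it must be
the line `Tᗮ ⊓ φ U`, and so must `φ U ⊓ φ W`; applying this to `U` and to `W` yields all the
1-orthogonality relations and the common intersection.
-/

open Module Submodule Function Set InnerProductSpace

section InnerProductSpace

variable {𝕜 E : Type*} [RCLike 𝕜] [NormedAddCommGroup E] [InnerProductSpace 𝕜 E]

theorem Orthonormal.sum_elim {ι κ : Type*} {v : ι → E} {w : κ → E} (hv : Orthonormal 𝕜 v)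
    (hw : Orthonormal 𝕜 w) (hvw : ∀ i j, ⟪v i, w j⟫_𝕜 = 0) : Orthonormal 𝕜 (Sum.elim v w) := by
  refine ⟨Sum.forall.2 ⟨hv.1, hw.1⟩, ?_⟩
  rintro (i | i) (j | j) hij
  · exact hv.2 (ne_of_apply_ne _ hij)
  · exact hvw i j
  · exact inner_eq_zero_symm.1 (hvw j i)
  · exact hw.2 (ne_of_apply_ne _ hij)

theorem Submodule.not_finiteDimensional_orthogonal (hE : ¬ FiniteDimensional 𝕜 E)
    (F : Submodule 𝕜 E) [FiniteDimensional 𝕜 F] : ¬ FiniteDimensional 𝕜 Fᗮ := by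
  intro hF
  have : FiniteDimensional 𝕜 (⊤ : Submodule 𝕜 E) :=
    sup_orthogonal_of_hasOrthogonalProjection (K := F) ▸ inferInstance
  exact hE (Module.Finite.equiv Submodule.topEquiv)

theorem exists_orthonormal_mem_orthogonal (hE : ¬ FiniteDimensional 𝕜 E) (F : Submodule 𝕜 E)
    [FiniteDimensional 𝕜 F] (ι : Type*) [Finite ι] :
    ∃ f : ι → E, Orthonormal 𝕜 f ∧ ∀ i, f i ∈ Fᗮ := by
  have hrank : (Nat.card ι : Cardinal) ≤ Module.rank 𝕜 Fᗮ :=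
    Cardinal.natCast_lt_aleph0.le.trans
      (not_lt.1 (mt rank_lt_aleph0_iff.1 (F.not_finiteDimensional_orthogonal hE)))
  obtain ⟨f, hf⟩ := exists_linearIndependent_of_le_rank hrank
  exact ⟨Fᗮ.subtypeₗᵢ ∘ gramSchmidtNormed 𝕜 f ∘ Finite.equivFin ι,
    ((gramSchmidtNormed_orthonormal hf).comp _ (Finite.equivFin ι).injective).comp_linearIsometry _,
    fun i => (gramSchmidtNormed 𝕜 f _).2⟩

theorem exists_pairwise_isOrtho_inf_ne_bot (hE : ¬ FiniteDimensional 𝕜 E)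
    {A P : Submodule 𝕜 E} [FiniteDimensional 𝕜 A] [FiniteDimensional 𝕜 P] (hAP : A ⟂ P)
    (d : ℕ) :
    ∃ X : Fin (finrank 𝕜 A) → Submodule 𝕜 E, (∀ i, finrank 𝕜 (X i) = d + 1) ∧
      Pairwise (fun i j => X i ⟂ X j) ∧ (∀ i, X i ⟂ P) ∧ ∀ i, X i ⊓ A ≠ ⊥ := by
  set k := finrank 𝕜 A
  let a : Fin k → E := A.subtypeₗᵢ ∘ stdOrthonormalBasis 𝕜 A
  have ha : Orthonormal 𝕜 a := (stdOrthonormalBasis 𝕜 A).orthonormal.comp_linearIsometry _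
  obtain ⟨f, hf, hfAP⟩ := exists_orthonormal_mem_orthogonal hE (A ⊔ P) (Fin k × Fin d)
  have hG := ha.sum_elim hf fun i j =>
    inner_right_of_mem_orthogonal (le_sup_left (b := P) (stdOrthonormalBasis 𝕜 A i).2) (hfAP j)
  -- `X i` is spanned by `a i` and `d` fresh vectors `f (i, j)`.
  let e (i : Fin k) (o : Option (Fin d)) : Fin k ⊕ (Fin k × Fin d) :=
    o.elim (.inl i) fun j => .inr (i, j)
  have he (i : Fin k) : Injective (e i) := by
    rintro (_ | _) (_ | _) h <;> simp_all [e]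
  refine ⟨fun i => span 𝕜 (range (Sum.elim a f ∘ e i)), fun i => ?_, fun i j hij => ?_,
    fun i => ?_, fun i => ?_⟩
  · rw [finrank_span_eq_card (hG.comp _ (he i)).linearIndependent]
    simp
  · refine isOrtho_span.2 ?_
    rintro _ ⟨o, rfl⟩ _ ⟨o', rfl⟩
    refine hG.2 ?_
    cases o <;> cases o' <;> simp [e, hij]
  · rw [isOrtho_iff_le, span_le]
    rintro _ ⟨_ | j, rfl⟩
    · exact hAP.le (stdOrthonormalBasis 𝕜 A i).2
    · exact orthogonal_le le_sup_right (hfAP (i, j))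
  · rw [Submodule.ne_bot_iff]
    exact ⟨a i, ⟨subset_span ⟨none, rfl⟩, (stdOrthonormalBasis 𝕜 A i).2⟩, ha.ne_zero i⟩

theorem eq_orthogonal_inf_of_isOrtho {U V T : Submodule 𝕜 E} (hTU : T ≤ U) (hTV : T ⟂ V)
    (hT : finrank 𝕜 T + 1 = finrank 𝕜 U) (hUV : U ⊓ V ≠ ⊥) :
    U ⊓ V = Tᗮ ⊓ U ∧ finrank 𝕜 (Tᗮ ⊓ U : Submodule 𝕜 E) = 1 := by
  have : FiniteDimensional 𝕜 U := Module.finite_of_finrank_pos (by omega)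
  have hrank := finrank_add_inf_finrank_orthogonal' hTU hT
  have : FiniteDimensional 𝕜 (U ⊓ V : Submodule 𝕜 E) := finiteDimensional_of_le inf_le_left
  refine ⟨eq_of_le_of_finrank_le (le_inf (inf_le_right.trans hTV.ge) inf_le_left) ?_, hrank⟩
  rw [hrank]
  exact one_le_finrank_iff.2 hUV

end InnerProductSpace

section Hilbert

variable {H : Type*} [NormedAddCommGroup H] [InnerProductSpace ℂ H]

theorem subPerp_iff_isOrtho {U V : Submodule ℂ H} : SubPerp U V ↔ U ⟂ V :=
  isOrtho_iff_inner_eq.symm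

namespace OneOrth

variable {U V : Submodule ℂ H}

theorem symm (h : OneOrth U V) : OneOrth V U := by
  refine ⟨inf_comm U V ▸ h.1, fun x hx y hy hxL hyL => ?_⟩
  rw [inf_comm] at hxL hyL
  exact inner_eq_zero_symm.1 (h.2 y hy x hx hyL hxL)

theorem inf_ne_bot (h : OneOrth U V) : U ⊓ V ≠ ⊥ := by
  intro hbot
  have := h.1
  rw [hbot, finrank_bot] at this
  exact zero_ne_one this

theorem isOrtho_orthogonal_inf (h : OneOrth U V) : (U ⊓ V)ᗮ ⊓ U ⟂ V := by
  have : FiniteDimensional ℂ (U ⊓ V : Submodule ℂ H) := Module.finite_of_finrank_eq_succ h.1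
  rw [isOrtho_iff_inner_eq]
  intro x hx y hy
  rw [← sup_orthogonal_inf_of_hasOrthogonalProjection (inf_le_right : U ⊓ V ≤ V)] at hy
  obtain ⟨l, hl, t, ht, rfl⟩ := mem_sup.1 hy
  rw [inner_add_right, inner_left_of_mem_orthogonal hl hx.1, zero_add]
  exact h.2 x hx.2 t ht.2 (fun z hz => inner_left_of_mem_orthogonal hz hx.1)
    (fun z hz => inner_left_of_mem_orthogonal hz ht.1)

theorem finrank_orthogonal_inf_add_one [FiniteDimensional ℂ U] (h : OneOrth U V) :
    finrank ℂ ((U ⊓ V)ᗮ ⊓ U : Submodule ℂ H) + 1 = finrank ℂ U := by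
  have := finrank_add_inf_finrank_orthogonal (inf_le_left : U ⊓ V ≤ U)
  rw [h.1] at this
  omega

end OneOrth

theorem oneOrth_of_isOrtho {U V T : Submodule ℂ H} (hTV : T ≤ V) (hTU : T ⟂ U)
    (hT : finrank ℂ T + 1 = finrank ℂ V) (hUV : U ⊓ V ≠ ⊥) : OneOrth U V := by
  obtain ⟨hL, hrank⟩ := eq_orthogonal_inf_of_isOrtho hTV hTU hT (inf_comm U V ▸ hUV)
  rw [inf_comm] at hL
  refine ⟨hL ▸ hrank, fun x hx y hy _ hyL => ?_⟩
  have : FiniteDimensional ℂ V := Module.finite_of_finrank_pos (by omega)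
  have : FiniteDimensional ℂ T := finiteDimensional_of_le hTV
  rw [← sup_orthogonal_inf_of_hasOrthogonalProjection hTV] at hy
  obtain ⟨t, ht, l, hl, rfl⟩ := mem_sup.1 hy
  -- the component `l` lies on the line `U ⊓ V` and is orthogonal to it
  have hl0 : l = 0 := by
    have := hyL l (hL ▸ hl)
    rwa [inner_add_left, inner_right_of_mem_orthogonal ht hl.1, zero_add,
      inner_self_eq_zero] at this
  rw [hl0, add_zero]
  exact inner_eq_zero_symm.1 (hTU.inner_eq ht hx)

end Hilbert

section PreservingMap

variable {H : Type*} [NormedAddCommGroup H] [InnerProductSpace ℂ H] {n : ℕ}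
  {φ : {U : Submodule ℂ H // finrank ℂ U = n} → {U : Submodule ℂ H // finrank ℂ U = n}}

theorem exists_le_image_isOrtho_of_isOrtho (hH : ¬ FiniteDimensional ℂ H)
    (hperp : ∀ X Y, SubPerp X.1 Y.1 → SubPerp (φ X).1 (φ Y).1)
    (hint : ∀ X Y, (φ X).1 ⊓ (φ Y).1 = ⊥ → X.1 ⊓ Y.1 = ⊥) (hn : 0 < n)
    {U V W : {U : Submodule ℂ H // finrank ℂ U = n}} {A : Submodule ℂ H}
    (hAU : A ≤ U.1) (hAV : A ⟂ V.1) (hAW : A ⟂ W.1) :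
    ∃ T ≤ (φ U).1, finrank ℂ T = finrank ℂ A ∧ T ⟂ (φ V).1 ∧ T ⟂ (φ W).1 := by
  obtain ⟨d, rfl⟩ : ∃ d, n = d + 1 := ⟨n - 1, by omega⟩
  have := Module.finite_of_finrank_eq_succ U.2
  have := Module.finite_of_finrank_eq_succ V.2
  have := Module.finite_of_finrank_eq_succ W.2
  have : FiniteDimensional ℂ A := finiteDimensional_of_le hAU
  obtain ⟨X, hXrank, hXX, hXVW, hXA⟩ :=
    exists_pairwise_isOrtho_inf_ne_bot hH (isOrtho_sup_right.2 ⟨hAV, hAW⟩) d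
  let X' (i : Fin (finrank ℂ A)) : {U : Submodule ℂ H // finrank ℂ U = d + 1} := ⟨X i, hXrank i⟩
  have hmeet (i) : (φ (X' i)).1 ⊓ (φ U).1 ≠ ⊥ := fun h =>
    hXA i (eq_bot_mono (inf_le_inf_left _ hAU) (hint _ _ h))
  choose u hu hu0 using fun i => exists_mem_ne_zero_of_ne_bot (hmeet i)
  have hu_orth (i) (Y : {U : Submodule ℂ H // finrank ℂ U = d + 1}) (h : X i ⟂ Y.1) :
      u i ∈ (φ Y).1ᗮ :=
    (subPerp_iff_isOrtho.1 (hperp (X' i) Y (subPerp_iff_isOrtho.2 h))).le (hu i).1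
  have hspan_orth (Y : {U : Submodule ℂ H // finrank ℂ U = d + 1}) (h : ∀ i, X i ⟂ Y.1) :
      span ℂ (range u) ⟂ (φ Y).1 :=
    isOrtho_iff_le.2 (span_le.2 (range_subset_iff.2 fun i => hu_orth i Y (h i)))
  refine ⟨span ℂ (range u), span_le.2 (range_subset_iff.2 fun i => (hu i).2), ?_,
    hspan_orth V fun i => (isOrtho_sup_right.1 (hXVW i)).1,
    hspan_orth W fun i => (isOrtho_sup_right.1 (hXVW i)).2⟩
  have hu_indep : LinearIndependent ℂ u := linearIndependent_of_ne_zero_of_inner_eq_zero hu0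
    fun i j hij => inner_right_of_mem_orthogonal (hu i).1 (hu_orth j (X' i) (hXX hij.symm))
  rw [finrank_span_eq_card hu_indep]
  simp

theorem OneOrth.exists_le_image_isOrtho (hH : ¬ FiniteDimensional ℂ H)
    (hperp : ∀ X Y, SubPerp X.1 Y.1 → SubPerp (φ X).1 (φ Y).1)
    (hint : ∀ X Y, (φ X).1 ⊓ (φ Y).1 = ⊥ → X.1 ⊓ Y.1 = ⊥) (hn : 0 < n)
    {U V W : {U : Submodule ℂ H // finrank ℂ U = n}} (hUV : OneOrth U.1 V.1)
    (hUW : OneOrth U.1 W.1) (hL : U.1 ⊓ V.1 = U.1 ⊓ W.1) :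
    ∃ T ≤ (φ U).1, finrank ℂ T + 1 = n ∧ T ⟂ (φ V).1 ∧ T ⟂ (φ W).1 := by
  have : FiniteDimensional ℂ U.1 := Module.finite_of_finrank_pos (by rwa [U.2])
  obtain ⟨T, hTU, hT, hTV, hTW⟩ := exists_le_image_isOrtho_of_isOrtho hH hperp hint hn inf_le_right
    hUV.isOrtho_orthogonal_inf (hL ▸ hUW.isOrtho_orthogonal_inf)
  exact ⟨T, hTU, by rw [hT, hUV.finrank_orthogonal_inf_add_one, U.2], hTV, hTW⟩

end PreservingMap

theorem oneOrth_triple_preserved_general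
    {H : Type*} [NormedAddCommGroup H] [InnerProductSpace ℂ H]
    (hH : ¬ FiniteDimensional ℂ H)
    (n : ℕ) (hn : 2 ≤ n)
    (φ : {U : Submodule ℂ H // Module.finrank ℂ U = n} →
         {U : Submodule ℂ H // Module.finrank ℂ U = n})
    (hperp : ∀ U V, SubPerp U.1 V.1 ↔ SubPerp (φ U).1 (φ V).1)
    (hint : ∀ U V, U.1 ⊓ V.1 = ⊥ ↔ (φ U).1 ⊓ (φ V).1 = ⊥) :
    ∀ U V W, OneOrth U.1 V.1 → OneOrth U.1 W.1 → OneOrth V.1 W.1 →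
      U.1 ⊓ V.1 = U.1 ⊓ W.1 → U.1 ⊓ W.1 = V.1 ⊓ W.1 →
      OneOrth (φ U).1 (φ V).1 ∧ OneOrth (φ U).1 (φ W).1 ∧ OneOrth (φ V).1 (φ W).1 ∧
      (φ U).1 ⊓ (φ V).1 = (φ U).1 ⊓ (φ W).1 ∧
      (φ U).1 ⊓ (φ W).1 = (φ V).1 ⊓ (φ W).1 := by
  intro U V W hUV hUW hVW hUV_UW hUW_VW
  have hperp' X Y := (hperp X Y).1
  have hint' X Y := (hint X Y).2
  have hne {X Y} (h : OneOrth X.1 Y.1) : (φ X).1 ⊓ (φ Y).1 ≠ ⊥ := mt (hint X Y).2 h.inf_ne_bot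
  obtain ⟨TU, hTU, hTU_rank, hTU_V, hTU_W⟩ :=
    hUV.exists_le_image_isOrtho hH hperp' hint' (by omega) hUW hUV_UW
  obtain ⟨TW, hTW, hTW_rank, hTW_U, hTW_V⟩ :=
    hUW.symm.exists_le_image_isOrtho hH hperp' hint' (by omega) hVW.symm
      (by rw [inf_comm, hUW_VW, inf_comm])
  rw [← (φ U).2] at hTU_rank
  rw [← (φ W).2] at hTW_rank
  refine ⟨(oneOrth_of_isOrtho hTU hTU_V hTU_rank (hne hUV.symm)).symm,
    oneOrth_of_isOrtho hTW hTW_U hTW_rank (hne hUW),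
    oneOrth_of_isOrtho hTW hTW_V hTW_rank (hne hVW), ?_, ?_⟩
  · rw [(eq_orthogonal_inf_of_isOrtho hTU hTU_V hTU_rank (hne hUV)).1,
      (eq_orthogonal_inf_of_isOrtho hTU hTU_W hTU_rank (hne hUW)).1]
  · rw [inf_comm, inf_comm (φ V).1,
      (eq_orthogonal_inf_of_isOrtho hTW hTW_U hTW_rank (hne hUW.symm)).1,
      (eq_orthogonal_inf_of_isOrtho hTW hTW_V hTW_rank (hne hVW.symm)).1]

/-- If `H` is infinite-dimensional, `n ≥ 2`, and `φ : P_n(H) → P_n(H)` preserves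
orthogonality and trivial intersection in both directions, then `φ` preserves triples of
pairwise 1-orthogonal subspaces with common pairwise intersection. -/
theorem oneOrth_triple_preserved
    {H : Type*} [NormedAddCommGroup H] [InnerProductSpace ℂ H] [CompleteSpace H]
    (hH : ¬ FiniteDimensional ℂ H)
    (n : ℕ) (hn : 2 ≤ n)
    (φ : {U : Submodule ℂ H // Module.finrank ℂ U = n} →
         {U : Submodule ℂ H // Module.finrank ℂ U = n})
    (hperp : ∀ U V, SubPerp U.1 V.1 ↔ SubPerp (φ U).1 (φ V).1)
    (hint : ∀ U V, U.1 ⊓ V.1 = ⊥ ↔ (φ U).1 ⊓ (φ V).1 = ⊥) :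
    ∀ U V W, OneOrth U.1 V.1 → OneOrth U.1 W.1 → OneOrth V.1 W.1 →
      U.1 ⊓ V.1 = U.1 ⊓ W.1 → U.1 ⊓ W.1 = V.1 ⊓ W.1 →
      OneOrth (φ U).1 (φ V).1 ∧ OneOrth (φ U).1 (φ W).1 ∧ OneOrth (φ V).1 (φ W).1 ∧
      (φ U).1 ⊓ (φ V).1 = (φ U).1 ⊓ (φ W).1 ∧
      (φ U).1 ⊓ (φ W).1 = (φ V).1 ⊓ (φ W).1 :=
  oneOrth_triple_preserved_general hH n hn φ hperp hint
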